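/- arXiv:0708.2773 — 3 statements merged into one kernel-verified Lean document; each statement's English description precedes it below -/
import Mathlib

section
/- Let Y_1,…,Y_n be pairwise commuting linear vector fields on ℝⁿ, Y_i = Σ_r ℓ_{ir} ∂_r with ℓ_{ir} linear forms, and suppose D := det ℓ is not identically zero. Then D is a joint eigenvector of the Lie-derivative action of the Y_i on polynomials: Y_i(D) = (div Y_i) · D for every i ∈ {1,…,n}. -/
open MvPolynomial Finset

/-- The action of the linear vector field `Y = Σ_{r,s} A r s • x_s ∂_r` on polynomials. -/
noncomputable def linVF {n : ℕ} (A : Matrix (Fin n) (Fin n) ℝ)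
    (P : MvPolynomial (Fin n) ℝ) : MvPolynomial (Fin n) ℝ :=
  ∑ r, (∑ s, C (A r s) * X s) * pderiv r P

/-- The matrix `ℓ` of coefficient linear forms of the vector fields `Y_i`. -/
noncomputable def coeffMat {n : ℕ} (a : Fin n → Matrix (Fin n) (Fin n) ℝ) :
    Matrix (Fin n) (Fin n) (MvPolynomial (Fin n) ℝ) :=
  fun i r => ∑ s, C (a i r s) * X s

variable {n : ℕ}

/-- Leibniz rule for `pderiv` on a finite product. -/
lemma pderiv_finset_prod (s : Fin n) {ι : Type*} [DecidableEq ι] (t : Finset ι)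
    (f : ι → MvPolynomial (Fin n) ℝ) :
    pderiv s (∏ j ∈ t, f j) = ∑ j ∈ t, pderiv s (f j) * ∏ k ∈ t.erase j, f k := by
  induction t using Finset.induction_on with
  | empty => simp
  | @insert b t hb ih =>
    rw [Finset.prod_insert hb, pderiv_mul, ih, Finset.sum_insert hb,
      Finset.erase_insert hb, Finset.mul_sum]
    congr 1
    refine Finset.sum_congr rfl fun j hj => ?_
    have hjb : j ≠ b := fun h => hb (h ▸ hj)
    rw [Finset.erase_insert_of_ne (Ne.symm hjb), Finset.prod_insert (fun h => hb (Finset.mem_of_mem_erase h))]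
    ring

/-- Derivation formula for the determinant. -/
lemma pderiv_det (s : Fin n) (M : Matrix (Fin n) (Fin n) (MvPolynomial (Fin n) ℝ)) :
    pderiv s M.det
      = ∑ r, (M.updateCol r (fun p => pderiv s (M p r))).det := by
  have h1 : ∀ r : Fin n, (M.updateCol r fun p => pderiv s (M p r)).det
      = ∑ σ : Equiv.Perm (Fin n),
          ((Equiv.Perm.sign σ : ℤ) : MvPolynomial (Fin n) ℝ) *
            (pderiv s (M (σ r) r) * ∏ k ∈ Finset.univ.erase r, M (σ k) k) := by
    intro r
    rw [Matrix.det_apply']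
    refine Finset.sum_congr rfl fun σ _ => ?_
    congr 1
    rw [← Finset.mul_prod_erase Finset.univ _ (Finset.mem_univ r)]
    congr 1
    · simp [Matrix.updateCol_apply]
    · refine Finset.prod_congr rfl fun k hk => ?_
      simp [Matrix.updateCol_apply, Finset.ne_of_mem_erase hk]
  simp_rw [h1]
  rw [Matrix.det_apply', map_sum, Finset.sum_comm]
  refine Finset.sum_congr rfl fun σ _ => ?_
  have hc : pderiv s (((Equiv.Perm.sign σ : ℤ) : MvPolynomial (Fin n) ℝ)) = 0 := by
    rw [← map_intCast (C : ℝ →+* MvPolynomial (Fin n) ℝ)]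
    exact pderiv_C
  rw [pderiv_mul, hc, zero_mul, zero_add, pderiv_finset_prod, Finset.mul_sum]

lemma coeffMat_apply (a : Fin n → Matrix (Fin n) (Fin n) ℝ) (p r : Fin n) :
    coeffMat a p r = ∑ t, C (a p r t) * X t := rfl

lemma pderiv_coeffMat (a : Fin n → Matrix (Fin n) (Fin n) ℝ) (p r s : Fin n) :
    pderiv s (coeffMat a p r) = C (a p r s) := by
  rw [coeffMat_apply, map_sum]
  rw [Finset.sum_eq_single s]
  · simp
  · intro t _ hts; simp [pderiv_X, hts]
  · simp

lemma linVF_X (A : Matrix (Fin n) (Fin n) ℝ) (r : Fin n) :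
    linVF A (X r) = ∑ t, C (A r t) * X t := by
  unfold linVF
  rw [Finset.sum_eq_single r]
  · simp
  · intro t _ htr; simp [pderiv_X, htr]
  · simp

lemma det_updateCol_sum_fun (M : Matrix (Fin n) (Fin n) (MvPolynomial (Fin n) ℝ))
    (r : Fin n) {ι : Type*} [DecidableEq ι] (t : Finset ι) (f : ι → Fin n → MvPolynomial (Fin n) ℝ) :
    (M.updateCol r fun p => ∑ j ∈ t, f j p).det
      = ∑ j ∈ t, (M.updateCol r (f j)).det := by
  induction t using Finset.induction_on with
  | empty =>
    simp only [Finset.sum_empty]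
    exact Matrix.det_eq_zero_of_column_eq_zero r fun p => by simp [Matrix.updateCol_apply]
  | @insert b t hb ih =>
    simp only [Finset.sum_insert hb]
    have : (fun p => f b p + ∑ j ∈ t, f j p) = (f b + fun p => ∑ j ∈ t, f j p) := rfl
    rw [this, Matrix.det_updateCol_add, ih]

lemma linVF_sum_C_mul (A : Matrix (Fin n) (Fin n) ℝ) (c : Fin n → ℝ) :
    linVF A (∑ t, C (c t) * X t) = ∑ t, C (c t) * linVF A (X t) := by
  unfold linVF
  simp only [map_sum, pderiv_C_mul, Finset.mul_sum]
  rw [Finset.sum_comm]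
  exact Finset.sum_congr rfl fun t _ => Finset.sum_congr rfl fun s _ => by ring

/-- If `Y_1, …, Y_n` are pairwise commuting linear vector fields on `ℝⁿ` with coefficient
matrix `ℓ` and `D = det ℓ ≠ 0`, then `D` is a joint eigenvector:
`Y_i D = (div Y_i) · D` for every `i`. -/
theorem det_is_joint_eigenvector {n : ℕ} (a : Fin n → Matrix (Fin n) (Fin n) ℝ)
    (hcomm : ∀ i j P, linVF (a i) (linVF (a j) P) = linVF (a j) (linVF (a i) P))
    (hD : (coeffMat a).det ≠ 0) (i : Fin n) :
    linVF (a i) (coeffMat a).det = C (Matrix.trace (a i)) * (coeffMat a).det := by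
  have h1 : ∀ q w : Fin n, linVF (a q) (X w) = coeffMat a q w := fun q w => by
    rw [linVF_X]; rfl
  -- the key commutation identity
  have hassoc : ∀ p r : Fin n,
      (∑ s, coeffMat a i s * C (a p r s)) = ∑ t, C (a i r t) * coeffMat a p t := by
    intro p r
    have h2 : linVF (a i) (coeffMat a p r) = ∑ s, coeffMat a i s * C (a p r s) := by
      unfold linVF
      exact Finset.sum_congr rfl fun s _ => by rw [pderiv_coeffMat]; rfl
    rw [← h2, ← h1 p r, hcomm i p (X r), linVF_X, linVF_sum_C_mul]
    exact Finset.sum_congr rfl fun t _ => by rw [h1]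
  have hmain : linVF (a i) (coeffMat a).det
      = ∑ s, coeffMat a i s * pderiv s (coeffMat a).det := rfl
  rw [hmain]
  simp_rw [pderiv_det, pderiv_coeffMat, Finset.mul_sum]
  rw [Finset.sum_comm]
  have hcol : ∀ r : Fin n,
      (∑ s, coeffMat a i s * ((coeffMat a).updateCol r fun p => C (a p r s)).det)
        = C (a i r r) * (coeffMat a).det := by
    intro r
    have h3 : ∀ s : Fin n,
        coeffMat a i s * ((coeffMat a).updateCol r fun p => C (a p r s)).det
          = ((coeffMat a).updateCol r fun p => coeffMat a i s • C (a p r s)).det := by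
      intro s
      rw [show (fun p => coeffMat a i s • C (a p r s))
            = coeffMat a i s • fun p => C (a p r s) from rfl,
        Matrix.det_updateCol_smul]
    simp_rw [h3, smul_eq_mul]
    rw [← det_updateCol_sum_fun]
    have h4 : (fun p => ∑ s, coeffMat a i s * C (a p r s))
        = fun p => ∑ t, C (a i r t) * coeffMat a p t := by
      funext p
      exact hassoc p r
    rw [h4]
    have h5 := Matrix.det_updateCol_sum (coeffMat a) r (fun t => C (a i r t))
    simp only [smul_eq_mul] at h5
    rw [h5]
  simp_rw [hcol]
  rw [Matrix.trace, ← Finset.sum_mul]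
  congr 1
  rw [map_sum]
  rfl
end

section
/- Let X_1,…,X_n be pairwise commuting operators on a finite-dimensional complex vector space E and λ ∈ ℂⁿ. The Koszul cohomology KH*(X−λ, E) vanishes in all degrees if and only if the joint kernel ∩_{ℓ} ker(X_ℓ − λ_ℓ id) = 0 (equivalently, λ is not in the joint spectrum of (X_1,…,X_n)). -/
/-- Creation operator `e_{η_l}` on the exterior algebra on `n` generators. -/
noncomputable def creationOp (F : Type*) [Field F] (n : ℕ) (l : Fin n) :
    ExteriorAlgebra F (Fin n → F) →ₗ[F] ExteriorAlgebra F (Fin n → F) :=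
  LinearMap.mulLeft F (ExteriorAlgebra.ι F (Pi.single l 1))

/-- The (total) Koszul differential `𝒦 = Σ_j (X_j − λ_j id) ⊗ e_{η_j}` on `E ⊗ Λℂⁿ`. -/
noncomputable def koszulOp {E : Type*} [AddCommGroup E] [Module ℂ E] (n : ℕ)
    (X : Fin n → Module.End ℂ E) (lam : Fin n → ℂ) :
    TensorProduct ℂ E (ExteriorAlgebra ℂ (Fin n → ℂ)) →ₗ[ℂ]
      TensorProduct ℂ E (ExteriorAlgebra ℂ (Fin n → ℂ)) :=
  ∑ j, TensorProduct.map (X j - lam j • 1) (creationOp ℂ n j)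

/-- Contraction (annihilation) operator `ι_{η_l}`. -/
noncomputable def ctrOp (n : ℕ) (l : Fin n) :
    ExteriorAlgebra ℂ (Fin n → ℂ) →ₗ[ℂ] ExteriorAlgebra ℂ (Fin n → ℂ) :=
  CliffordAlgebra.contractLeft (Q := (0 : QuadraticForm ℂ (Fin n → ℂ))) (LinearMap.proj l)

lemma ctrOp_iota_mul (n : ℕ) (l : Fin n) (m : Fin n → ℂ) (x : ExteriorAlgebra ℂ (Fin n → ℂ)) :
    ctrOp n l (ExteriorAlgebra.ι ℂ m * x) = m l • x - ExteriorAlgebra.ι ℂ m * ctrOp n l x := by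
  rw [ctrOp,
    show ExteriorAlgebra.ι ℂ m = CliffordAlgebra.ι (0 : QuadraticForm ℂ (Fin n → ℂ)) m from rfl,
    CliffordAlgebra.contractLeft_ι_mul]
  rfl

lemma creation_ctr_anticomm (n : ℕ) (j k : Fin n) (w : ExteriorAlgebra ℂ (Fin n → ℂ)) :
    creationOp ℂ n k (ctrOp n j w) + ctrOp n j (creationOp ℂ n k w)
      = (if j = k then (1 : ℂ) else 0) • w := by
  simp only [creationOp, LinearMap.mulLeft_apply]
  rw [ctrOp_iota_mul, Pi.single_apply]
  abel

lemma koszulOp_tmul {E : Type*} [AddCommGroup E] [Module ℂ E] (n : ℕ)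
    (X : Fin n → Module.End ℂ E) (lam : Fin n → ℂ) (v : E)
    (w : ExteriorAlgebra ℂ (Fin n → ℂ)) :
    koszulOp n X lam (v ⊗ₜ[ℂ] w)
      = ∑ j, ((X j - lam j • 1) v) ⊗ₜ[ℂ] (creationOp ℂ n j w) := by
  simp [koszulOp, LinearMap.sum_apply, TensorProduct.map_tmul]

/-- Nakayama-style key lemma: if the joint kernel of commuting `a l` acting on an
Artinian-Noetherian module is trivial, then some combination `∑ c l * a l` acts as the
identity. -/
theorem key_nakayama {R : Type*} [CommRing R] {E : Type*} [AddCommGroup E] [Module R E]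
    [IsArtinian R E] [IsNoetherian R E] {n : ℕ} (a : Fin n → R)
    (hker : ∀ v : E, (∀ l, a l • v = 0) → v = 0) :
    ∃ c : Fin n → R, ∀ v : E, (∑ l, c l * a l) • v = v := by
  set I : Ideal R := Ideal.span (Set.range a) with hI
  have haI : ∀ l, a l ∈ I := fun l => Ideal.subset_span ⟨l, rfl⟩
  have hann : ∀ (j : ℕ) (v : E), (∀ s ∈ I ^ j, s • v = 0) → v = 0 := by
    intro j
    induction j with
    | zero =>
      intro v hv
      have := hv 1 (by rw [pow_zero, Ideal.one_eq_top]; exact Submodule.mem_top)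
      simpa using this
    | succ j ih =>
      intro v hv
      refine hker v fun l => ih _ fun s hs => ?_
      rw [smul_smul]
      exact hv (s * a l) (by rw [pow_succ]; exact Ideal.mul_mem_mul hs (haI l))
  obtain ⟨N, hN⟩ := IsArtinian.monotone_stabilizes
    (⟨fun k => OrderDual.toDual ((I ^ k) • (⊤ : Submodule R E)),
      fun k m h => Submodule.smul_mono_left (Ideal.pow_le_pow_right h)⟩ : ℕ →o (Submodule R E)ᵒᵈ)
  have hstab : (I ^ N) • (⊤ : Submodule R E) = (I ^ (N + 1)) • ⊤ :=
    OrderDual.toDual.injective (hN (N + 1) (Nat.le_succ N))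
  have hle : (I ^ N) • (⊤ : Submodule R E) ≤ I • ((I ^ N) • (⊤ : Submodule R E)) := by
    rw [← Submodule.smul_assoc, Ideal.smul_eq_mul, ← pow_succ']
    exact le_of_eq hstab
  obtain ⟨r, hr1, hr2⟩ := Submodule.exists_sub_one_mem_and_smul_eq_zero_of_fg_of_le_smul I
    ((I ^ N) • (⊤ : Submodule R E)) (IsNoetherian.noetherian _) hle
  set t : R := 1 - r with ht
  have htI : t ∈ I := by
    have := I.neg_mem hr1
    simpa [ht] using this
  have htV : ∀ v ∈ (I ^ N) • (⊤ : Submodule R E), t • v = v := by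
    intro v hv
    rw [ht, sub_smul, one_smul, hr2 v hv, sub_zero]
  have hid : ∀ v : E, t • v = v := by
    intro v
    have h0 : v - t • v = 0 := by
      refine hann N _ fun s hs => ?_
      have hsv : s • v ∈ (I ^ N) • (⊤ : Submodule R E) :=
        Submodule.smul_mem_smul hs Submodule.mem_top
      rw [smul_sub, smul_smul, mul_comm s t, ← smul_smul, htV _ hsv, sub_self]
    have := sub_eq_zero.mp h0
    exact this.symm
  obtain ⟨c, hc⟩ := (Submodule.mem_span_range_iff_exists_fun R).mp htI
  refine ⟨c, fun v => ?_⟩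
  have hsum : ∑ l, c l * a l = t := by simpa [smul_eq_mul] using hc
  rw [hsum]
  exact hid v

lemma koszul_homotopy {E : Type*} [AddCommGroup E] [Module ℂ E] (n : ℕ)
    (X : Fin n → Module.End ℂ E) (lam : Fin n → ℂ) (Y : Fin n → Module.End ℂ E)
    (hYA : ∀ j k, (X k - lam k • 1) * Y j = Y j * (X k - lam k • 1))
    (hY1 : ∑ l, Y l * (X l - lam l • 1) = 1)
    (c : TensorProduct ℂ E (ExteriorAlgebra ℂ (Fin n → ℂ))) :
    koszulOp n X lam ((∑ j, TensorProduct.map (Y j) (ctrOp n j)) c)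
      + (∑ j, TensorProduct.map (Y j) (ctrOp n j)) (koszulOp n X lam c) = c := by
  induction c using TensorProduct.induction_on with
  | zero => simp
  | add x y hx hy =>
    rw [map_add, map_add, map_add, map_add]
    calc _ = (koszulOp n X lam ((∑ j, TensorProduct.map (Y j) (ctrOp n j)) x)
          + (∑ j, TensorProduct.map (Y j) (ctrOp n j)) (koszulOp n X lam x))
        + (koszulOp n X lam ((∑ j, TensorProduct.map (Y j) (ctrOp n j)) y)
          + (∑ j, TensorProduct.map (Y j) (ctrOp n j)) (koszulOp n X lam y)) := by abel
    _ = x + y := by rw [hx, hy]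
  | tmul v w =>
    have hHt : ∀ (v : E) (w : ExteriorAlgebra ℂ (Fin n → ℂ)),
        (∑ j, TensorProduct.map (Y j) (ctrOp n j)) (v ⊗ₜ[ℂ] w)
          = ∑ j, (Y j v) ⊗ₜ[ℂ] (ctrOp n j w) := by
      intro v w
      simp [LinearMap.sum_apply, TensorProduct.map_tmul]
    have e1 : koszulOp n X lam ((∑ j, TensorProduct.map (Y j) (ctrOp n j)) (v ⊗ₜ[ℂ] w))
        = ∑ j, ∑ k, (Y j ((X k - lam k • 1) v)) ⊗ₜ[ℂ] (creationOp ℂ n k (ctrOp n j w)) := by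
      rw [hHt, map_sum]
      refine Finset.sum_congr rfl fun j _ => ?_
      rw [koszulOp_tmul]
      refine Finset.sum_congr rfl fun k _ => ?_
      congr 1
      have := LinearMap.congr_fun (hYA j k) v
      simpa [Module.End.mul_apply] using this
    have e2 : (∑ j, TensorProduct.map (Y j) (ctrOp n j)) (koszulOp n X lam (v ⊗ₜ[ℂ] w))
        = ∑ j, ∑ k, (Y j ((X k - lam k • 1) v)) ⊗ₜ[ℂ] (ctrOp n j (creationOp ℂ n k w)) := by
      rw [koszulOp_tmul, map_sum]
      simp only [hHt]
      rw [Finset.sum_comm]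
    rw [e1, e2, ← Finset.sum_add_distrib]
    have e3 : ∀ j : Fin n,
        (∑ k, (Y j ((X k - lam k • 1) v)) ⊗ₜ[ℂ] (creationOp ℂ n k (ctrOp n j w)))
          + (∑ k, (Y j ((X k - lam k • 1) v)) ⊗ₜ[ℂ] (ctrOp n j (creationOp ℂ n k w)))
        = (Y j ((X j - lam j • 1) v)) ⊗ₜ[ℂ] w := by
      intro j
      rw [← Finset.sum_add_distrib]
      have : ∀ k : Fin n,
          (Y j ((X k - lam k • 1) v)) ⊗ₜ[ℂ] (creationOp ℂ n k (ctrOp n j w))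
            + (Y j ((X k - lam k • 1) v)) ⊗ₜ[ℂ] (ctrOp n j (creationOp ℂ n k w))
          = (if j = k then (1 : ℂ) else 0) • ((Y j ((X k - lam k • 1) v)) ⊗ₜ[ℂ] w) := by
        intro k
        rw [← TensorProduct.tmul_add, creation_ctr_anticomm, TensorProduct.tmul_smul]
      simp only [this, ite_smul, one_smul, zero_smul, Finset.sum_ite_eq, Finset.mem_univ,
        if_true]
    simp only [e3]
    rw [← TensorProduct.sum_tmul]
    have : ∑ j, Y j ((X j - lam j • 1) v) = v := by
      have := LinearMap.congr_fun hY1 v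
      simpa [LinearMap.sum_apply, Module.End.mul_apply] using this
    rw [this]

lemma algebraMapInv_iota_mul (n : ℕ) (m : Fin n → ℂ) (w : ExteriorAlgebra ℂ (Fin n → ℂ)) :
    ExteriorAlgebra.algebraMapInv (ExteriorAlgebra.ι ℂ m * w) = 0 := by
  rw [map_mul]
  have : ExteriorAlgebra.algebraMapInv (ExteriorAlgebra.ι ℂ m) = 0 := by
    simp [ExteriorAlgebra.algebraMapInv]
  rw [this, zero_mul]

set_option maxHeartbeats 1000000 in
set_option synthInstance.maxHeartbeats 400000 in
/-- The Koszul cohomology `KH*(X − λ, E)` vanishes (every cocycle bounds) if and only if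
the joint kernel `∩_l ker(X_l − λ_l id)` is zero, i.e. `λ` is not in the joint spectrum
of the commuting tuple `(X_1, …, X_n)`. -/
theorem koszul_acyclic_iff_joint_kernel_trivial {E : Type*} [AddCommGroup E]
    [Module ℂ E] [FiniteDimensional ℂ E] (n : ℕ)
    (X : Fin n → Module.End ℂ E)
    (hX : ∀ k l, X k * X l = X l * X k)
    (lam : Fin n → ℂ) :
    (∀ c : TensorProduct ℂ E (ExteriorAlgebra ℂ (Fin n → ℂ)),
        koszulOp n X lam c = 0 → ∃ b, koszulOp n X lam b = c) ↔
      (⨅ l, LinearMap.ker (X l - lam l • 1)) = ⊥ := by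
  constructor
  · -- acyclic → joint kernel trivial
    intro hsurj
    rw [eq_bot_iff]
    intro e he
    rw [Submodule.mem_bot]
    simp only [Submodule.mem_iInf, LinearMap.mem_ker] at he
    -- the cocycle `e ⊗ 1`
    have hc : koszulOp n X lam (e ⊗ₜ[ℂ] 1) = 0 := by
      rw [koszulOp_tmul]
      simp [he]
    obtain ⟨b, hb⟩ := hsurj _ hc
    -- degree-zero projection
    set π : ExteriorAlgebra ℂ (Fin n → ℂ) →ₗ[ℂ] ℂ :=
      (ExteriorAlgebra.algebraMapInv : ExteriorAlgebra ℂ (Fin n → ℂ) →ₐ[ℂ] ℂ).toLinearMap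
      with hπ
    set P : TensorProduct ℂ E (ExteriorAlgebra ℂ (Fin n → ℂ)) →ₗ[ℂ] TensorProduct ℂ E ℂ :=
      TensorProduct.map LinearMap.id π with hP
    have hPk : ∀ b, P (koszulOp n X lam b) = 0 := by
      intro b
      induction b using TensorProduct.induction_on with
      | zero => simp
      | add x y hx hy => rw [map_add, map_add, hx, hy, add_zero]
      | tmul v w =>
        rw [koszulOp_tmul, map_sum]
        refine Finset.sum_eq_zero fun j _ => ?_
        rw [hP, TensorProduct.map_tmul]
        have : π (creationOp ℂ n j w) = 0 := by
          rw [creationOp, LinearMap.mulLeft_apply, hπ, AlgHom.toLinearMap_apply]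
          exact algebraMapInv_iota_mul n _ w
        rw [this, TensorProduct.tmul_zero]
    have h1 : P (e ⊗ₜ[ℂ] 1) = 0 := by rw [← hb]; exact hPk b
    have h2 : P (e ⊗ₜ[ℂ] 1) = e ⊗ₜ[ℂ] (1 : ℂ) := by
      rw [hP, TensorProduct.map_tmul, LinearMap.id_apply, hπ]
      norm_num
    have h3 : (e ⊗ₜ[ℂ] (1 : ℂ) : TensorProduct ℂ E ℂ) = 0 := by rw [← h2, h1]
    have := congrArg (TensorProduct.rid ℂ E) h3
    simpa using this
  · -- joint kernel trivial → acyclic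
    intro hker
    set A : Fin n → Module.End ℂ E := fun l => X l - lam l • 1 with hA
    have hAcomm : ∀ k l, Commute (A k) (A l) := by
      intro k l
      have h1 : Commute (X k) (X l) := hX k l
      have h2 : Commute (X k) (lam l • 1) := (Commute.one_right (X k)).smul_right (lam l)
      have h3 : Commute (lam k • 1) (X l) := (Commute.one_left (X l)).smul_left (lam k)
      have h4 : Commute (lam k • (1:Module.End ℂ E)) (lam l • (1:Module.End ℂ E)) :=
        ((Commute.one_left (1 : Module.End ℂ E)).smul_left (lam k)).smul_right (lam l)
      exact (h1.sub_right h2).sub_left (h3.sub_right h4)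
    let R : Subalgebra ℂ (Module.End ℂ E) := Algebra.adjoin ℂ (Set.range A)
    have hAR : ∀ l, A l ∈ R := fun l => Algebra.subset_adjoin ⟨l, rfl⟩
    letI : CommRing R := Algebra.adjoinCommRingOfComm ℂ (by
      rintro a ⟨k, rfl⟩ b ⟨l, rfl⟩; exact hAcomm k l)
    letI : Algebra ℂ R := Subalgebra.algebra R
    letI : Module R E := inferInstance
    have hsmul : ∀ (r : R) (v : E), r • v = (r : Module.End ℂ E) v := fun _ _ => rfl
    letI : IsScalarTower ℂ R E := ⟨fun c r v => by
      show ((c • r : R) : Module.End ℂ E) v = c • ((r : Module.End ℂ E) v)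
      rw [Subalgebra.coe_smul, LinearMap.smul_apply]⟩
    haveI : IsArtinian R E := isArtinian_of_tower ℂ inferInstance
    haveI : IsNoetherian R E := isNoetherian_of_tower ℂ inferInstance
    set a : Fin n → R := fun l => ⟨A l, hAR l⟩ with ha
    have hker' : ∀ v : E, (∀ l, a l • v = 0) → v = 0 := by
      intro v hv
      have : v ∈ (⨅ l, LinearMap.ker (X l - lam l • 1)) := by
        simp only [Submodule.mem_iInf, LinearMap.mem_ker]
        intro l
        exact hv l
      rw [hker] at this
      simpa using this
    obtain ⟨c, hc⟩ := key_nakayama a hker'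
    set Y : Fin n → Module.End ℂ E := fun l => (c l : Module.End ℂ E) with hY
    have hY1 : ∑ l, Y l * A l = 1 := by
      have hval : ((∑ l, c l * a l : R) : Module.End ℂ E) = ∑ l, Y l * A l := by
        show R.val (∑ l, c l * a l) = _
        rw [map_sum]
        refine Finset.sum_congr rfl fun l _ => ?_
        show R.val (c l * a l) = _
        rw [map_mul]
        rfl
      have hone : ((∑ l, c l * a l : R) : Module.End ℂ E) = 1 := by
        apply LinearMap.ext
        intro v
        have := hc v
        rw [hsmul] at this
        simpa using this
      rw [← hval, hone]
    have hYA : ∀ j k, A k * Y j = Y j * A k := by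
      intro j k
      have h := congrArg (Subalgebra.val R) (mul_comm (a k) (c j))
      simpa [hY, ha] using h
    intro co hco
    refine ⟨(∑ j, TensorProduct.map (Y j) (ctrOp n j)) co, ?_⟩
    have := koszul_homotopy n X lam Y hYA hY1 co
    rw [hco, map_zero, add_zero] at this
    exact this
end

section
/- On a finite-dimensional complex vector space E, let X_1,…,X_n be pairwise commuting operators and λ ∈ ℂⁿ. Suppose E = E₁ ⊕ E₂ where E₁ is invariant under all X_ℓ, and λ is not in the joint spectrum of the induced commuting operators X_{ℓ,2} = p₂ X_ℓ i₂ on E₂ (p₂, i₂ being the projection and inclusion of E₂). Then every cocycle C ∈ E ⊗ Λ of the Koszul complex K*(X−λ, E) is cohomologous to a cocycle lying in E₁ ⊗ Λ. -/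
/-!
Projecting onto `E₂` along the invariant subspace `E₁` intertwines the Koszul complex of
`X - λ` on `E` with that of the compressions `Y_ℓ = X_{ℓ,2}` on `E₂`. Since `λ` is not a joint
eigenvalue, the commuting operators `Y_ℓ - λ_ℓ` have no common kernel, so the ideal they span
in the finite-dimensional commutative algebra they generate has zero annihilator. In an
Artinian ring every maximal ideal is an associated prime, so that ideal is the unit ideal:
`Σ Z_ℓ (Y_ℓ - λ_ℓ) = 1` with `Z_ℓ` commuting with all `Y_k`. Then `s = Σ Z_ℓ ⊗ ι_ℓ`, with
`ι_ℓ` the contraction by the `ℓ`-th coordinate, is a contracting homotopy of the compressed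
complex. For a cocycle `c`, lift `s (p₂ c)` to some `b`; then `c - 𝒦 b` lies in the kernel of
`p₂ ⊗ id`, which by right exactness of `⊗` is `E₁ ⊗ Λ`.
-/

open TensorProduct

theorem IsArtinianRing.span_eq_top_of_forall_mul_eq_zero {R : Type*} [CommRing R]
    [IsArtinianRing R] {s : Set R} (hs : ∀ a : R, (∀ x ∈ s, x * a = 0) → a = 0) :
    Ideal.span s = ⊤ := by
  by_contra hne
  obtain ⟨m, hm, hsm⟩ := Ideal.exists_le_maximal _ hne
  have hmin : m ∈ (Module.annihilator R R).minimalPrimes := by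
    rw [Module.annihilator_eq_bot.mpr inferInstance]
    exact IsArtinianRing.mem_minimalPrimes bot_le
  obtain ⟨-, a, rfl⟩ := (isAssociatedPrime_iff ..).mp
    (Module.associatedPrimes.minimalPrimes_annihilator_subset_associatedPrimes R R hmin)
  have ha : a = 0 := hs a fun x hx => by
    simpa [Submodule.mem_colon_singleton] using hsm (Ideal.subset_span hx)
  exact hm.ne_top (by simp [ha, Submodule.colon])

open scoped IsMulCommutative in
theorem Module.End.exists_sum_mul_eq_one_of_commute {K V ι : Type*} [Field K] [AddCommGroup V]
    [Module K V] [FiniteDimensional K V] [Fintype ι] (T : ι → Module.End K V)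
    (hT : ∀ k l, Commute (T k) (T l)) (hker : ∀ v, (∀ l, T l v = 0) → v = 0) :
    ∃ Z : ι → Module.End K V, (∀ k l, Commute (Z k) (T l)) ∧ ∑ l, Z l * T l = 1 := by
  have hcomm : ∀ a ∈ Set.range T, ∀ b ∈ Set.range T, a * b = b * a := by
    rintro _ ⟨k, rfl⟩ _ ⟨l, rfl⟩
    exact hT k l
  let A := Algebra.adjoin K (Set.range T)
  have : IsMulCommutative A := Algebra.isMulCommutative_adjoin K hcomm
  have : IsArtinianRing A := IsArtinianRing.of_finite K A
  let t : ι → A := fun l => ⟨T l, Algebra.subset_adjoin (Set.mem_range_self l)⟩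
  have hspan : Ideal.span (Set.range t) = ⊤ := by
    refine IsArtinianRing.span_eq_top_of_forall_mul_eq_zero fun a ha => ?_
    refine Subtype.ext (LinearMap.ext fun v => hker _ fun l => ?_)
    exact LinearMap.congr_fun (congrArg Subtype.val (ha _ (Set.mem_range_self l))) v
  obtain ⟨c, hc⟩ :=
    Ideal.mem_span_range_iff_exists_fun.mp (hspan ▸ Submodule.mem_top (x := 1))
  refine ⟨fun l => c l, fun k l => congrArg Subtype.val (mul_comm (c k) (t l)), ?_⟩
  simpa using congrArg Subtype.val hc

section Projection

variable {R M : Type*} [Ring R] [AddCommGroup M] [Module R M] {p q : Submodule R M}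

theorem Submodule.projectionOnto_comp_eq_of_mapsTo (h : IsCompl p q) {T : Module.End R M}
    (hT : ∀ x ∈ q, T x ∈ q) :
    p.projectionOnto q h ∘ₗ T
      = (p.projectionOnto q h ∘ₗ T ∘ₗ p.subtype) ∘ₗ p.projectionOnto q h := by
  ext x
  rw [← sub_eq_zero]
  simpa [← map_sub] using hT _ (Submodule.sub_projection_mem h x)

theorem Submodule.projectionOnto_comp_mul_comp_subtype (h : IsCompl p q) {S : Module.End R M}
    (hS : ∀ x ∈ q, S x ∈ q) (T : Module.End R M) :
    p.projectionOnto q h ∘ₗ (S * T) ∘ₗ p.subtype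
      = (p.projectionOnto q h ∘ₗ S ∘ₗ p.subtype)
        * (p.projectionOnto q h ∘ₗ T ∘ₗ p.subtype) := by
  simpa only [Module.End.mul_eq_comp, LinearMap.comp_assoc] using
    congrArg (· ∘ₗ T ∘ₗ p.subtype) (projectionOnto_comp_eq_of_mapsTo h hS)

end Projection

theorem exists_apply_sub_eq_zero_of_contractingHomotopy {R M N : Type*} [Semiring R]
    [AddCommGroup M] [Module R M] [AddCommGroup N] [Module R N] {d : Module.End R M}
    {d' : Module.End R N} {π : M →ₗ[R] N} (hπ : π ∘ₗ d = d' ∘ₗ π)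
    (hsurj : Function.Surjective π) {s : Module.End R N} (hs : d' * s + s * d' = 1) {c : M}
    (hc : d c = 0) :
    ∃ b, π (c - d b) = 0 := by
  obtain ⟨b, hb⟩ := hsurj (s (π c))
  have hπc : d' (π c) = 0 := by
    rw [← LinearMap.comp_apply, ← hπ, LinearMap.comp_apply, hc, map_zero]
  have hcobound : d' (s (π c)) = π c := by
    simpa [hπc] using LinearMap.congr_fun hs (π c)
  refine ⟨b, ?_⟩
  rw [map_sub, ← LinearMap.comp_apply π, hπ, LinearMap.comp_apply, hb, hcobound, sub_self]

noncomputable def annihilationOp (n : ℕ) (l : Fin n) :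
    ExteriorAlgebra ℂ (Fin n → ℂ) →ₗ[ℂ] ExteriorAlgebra ℂ (Fin n → ℂ) :=
  CliffordAlgebra.contractLeft (Q := 0) (LinearMap.proj l)

theorem creationOp_mul_annihilationOp_add (n : ℕ) (j l : Fin n) :
    creationOp ℂ n j * annihilationOp n l + annihilationOp n l * creationOp ℂ n j
      = (Pi.single j (1 : ℂ) : Fin n → ℂ) l • 1 := by
  refine LinearMap.ext fun w => ?_
  have := CliffordAlgebra.contractLeft_ι_mul (Q := 0)
    (d := (LinearMap.proj l : (Fin n → ℂ) →ₗ[ℂ] ℂ)) (Pi.single j 1) w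
  simp only [LinearMap.proj_apply] at this
  simp only [LinearMap.add_apply, Module.End.mul_apply, LinearMap.smul_apply, Module.End.one_apply,
    creationOp, annihilationOp, LinearMap.mulLeft_apply]
  rw [this]
  abel

section Koszul

variable {V : Type*} [AddCommGroup V] [Module ℂ V] (n : ℕ)

noncomputable def koszulHomotopy (Z : Fin n → Module.End ℂ V) :
    Module.End ℂ (V ⊗[ℂ] ExteriorAlgebra ℂ (Fin n → ℂ)) :=
  ∑ l, map (Z l) (annihilationOp n l)

theorem koszulOp_mul_koszulHomotopy_add (Y : Fin n → Module.End ℂ V) (lam : Fin n → ℂ)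
    (Z : Fin n → Module.End ℂ V) (hcomm : ∀ k l, Commute (Z k) (Y l - lam l • 1))
    (hsum : ∑ l, Z l * (Y l - lam l • 1) = 1) :
    koszulOp n Y lam * koszulHomotopy n Z + koszulHomotopy n Z * koszulOp n Y lam = 1 := by
  have hterm : ∀ j l,
      map (Y j - lam j • 1) (creationOp ℂ n j) * map (Z l) (annihilationOp n l)
        + map (Z l) (annihilationOp n l) * map (Y j - lam j • 1) (creationOp ℂ n j)
        = (Pi.single j (1 : ℂ) : Fin n → ℂ) l • (Z l * (Y j - lam j • 1)).rTensor _ := by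
    intro j l
    rw [← TensorProduct.map_mul, ← TensorProduct.map_mul, ← (hcomm l j).eq, ← map_add_right,
      creationOp_mul_annihilationOp_add, map_smul_right]
    rfl
  simp only [koszulOp, koszulHomotopy, Finset.sum_mul, Finset.mul_sum]
  rw [Finset.sum_comm (f := fun l j => _ * _), ← Finset.sum_add_distrib]
  simp only [← Finset.sum_add_distrib, hterm, Pi.single_apply, ite_smul, one_smul, zero_smul,
    Finset.sum_ite_eq', Finset.mem_univ, if_true]
  rw [← LinearMap.coe_rTensorHom, ← map_sum, hsum]
  exact LinearMap.rTensor_id _ _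

theorem rTensor_comp_koszulOp {W : Type*} [AddCommGroup W] [Module ℂ W] (f : V →ₗ[ℂ] W)
    {X : Fin n → Module.End ℂ V} {Y : Fin n → Module.End ℂ W} (h : ∀ l, f ∘ₗ X l = Y l ∘ₗ f)
    (lam : Fin n → ℂ) :
    f.rTensor _ ∘ₗ koszulOp n X lam = koszulOp n Y lam ∘ₗ f.rTensor _ := by
  have hshift : ∀ l, f ∘ₗ (X l - lam l • 1) = (Y l - lam l • 1) ∘ₗ f := fun l => by
    rw [LinearMap.comp_sub, LinearMap.sub_comp, h, LinearMap.comp_smul, LinearMap.smul_comp]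
    rfl
  refine LinearMap.ext fun x => ?_
  simp only [LinearMap.comp_apply, koszulOp, LinearMap.sum_apply, map_sum,
    LinearMap.rTensor_map, LinearMap.map_rTensor, hshift]

end Koszul

/-- If `E = E₁ ⊕ E₂` with `E₁` invariant under the commuting operators `X_l`, and `λ` is not
in the joint spectrum (= set of joint eigenvalues) of the induced operators
`X_{l,2} = p₂ X_l i₂` on `E₂`, then every Koszul cocycle is cohomologous to one in `E₁ ⊗ Λ`. -/
theorem koszul_cocycle_reduction {E : Type*} [AddCommGroup E]
    [Module ℂ E] [FiniteDimensional ℂ E] (n : ℕ)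
    (X : Fin n → Module.End ℂ E)
    (hX : ∀ k l, X k * X l = X l * X k)
    (lam : Fin n → ℂ)
    (E₁ E₂ : Submodule ℂ E) (hcompl : IsCompl E₁ E₂)
    (hstab : ∀ l, ∀ x ∈ E₁, X l x ∈ E₁)
    (hspec : ¬ ∃ v : E₂, v ≠ 0 ∧ ∀ l,
      ((Submodule.linearProjOfIsCompl E₂ E₁ hcompl.symm) ∘ₗ (X l) ∘ₗ E₂.subtype) v
        = lam l • v) :
    ∀ c : TensorProduct ℂ E (ExteriorAlgebra ℂ (Fin n → ℂ)),
      koszulOp n X lam c = 0 →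
      ∃ b, c - koszulOp n X lam b ∈
        LinearMap.range (TensorProduct.map E₁.subtype
          (LinearMap.id (R := ℂ) (M := ExteriorAlgebra ℂ (Fin n → ℂ)))) := by
  intro c hc
  let p₂ := E₂.projectionOnto E₁ hcompl.symm
  let Y : Fin n → Module.End ℂ E₂ := fun l => p₂ ∘ₗ X l ∘ₗ E₂.subtype
  have hY : ∀ k l, Commute (Y k) (Y l) := fun k l => by
    rw [Commute, SemiconjBy, ← Submodule.projectionOnto_comp_mul_comp_subtype _ (hstab k),
      ← Submodule.projectionOnto_comp_mul_comp_subtype _ (hstab l), hX k l]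
  have hT : ∀ k l, Commute (Y k - lam k • 1) (Y l - lam l • 1) := fun k l =>
    ((hY k l).sub_right ((Commute.one_right _).smul_right _)).sub_left
      ((Commute.one_left _).smul_left _)
  have hker : ∀ v, (∀ l, (Y l - lam l • 1) v = 0) → v = 0 := fun v hv =>
    by_contra fun hne => hspec ⟨v, hne, fun l => sub_eq_zero.mp (hv l)⟩
  obtain ⟨Z, hZ, hZsum⟩ := Module.End.exists_sum_mul_eq_one_of_commute _ hT hker
  have hp₂ : Function.Surjective p₂ := Submodule.projectionOnto_surjective _
  have hp₂X : ∀ l, p₂ ∘ₗ X l = Y l ∘ₗ p₂ := fun l =>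
    Submodule.projectionOnto_comp_eq_of_mapsTo _ (hstab l)
  obtain ⟨b, hb⟩ := exists_apply_sub_eq_zero_of_contractingHomotopy
    (rTensor_comp_koszulOp n p₂ hp₂X lam) (LinearMap.rTensor_surjective _ hp₂)
    (koszulOp_mul_koszulHomotopy_add n Y lam Z hZ hZsum) hc
  have hexact : Function.Exact E₁.subtype p₂ := LinearMap.exact_iff.mpr (by simp [p₂])
  exact ⟨b, (rTensor_exact _ hexact hp₂ _).mp hb⟩
end
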